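/- arXiv:2008.05546 — 2 statements merged into one kernel-verified Lean document; each statement's English description precedes it below -/
import Mathlib

section
/- If Z is a complex n×n matrix such that the Hermitian part Z^h = (Z + Z†)/2 is positive semidefinite, and G = (Z − I)(Z + I)⁻¹ is defined (with Z + I invertible), then I − G†G is positive semidefinite. -/
/-! Since `(Z + 1)ᴴ (Z + 1) - (Z - 1)ᴴ (Z - 1) = 2 (Z + Zᴴ)` in any star ring, conjugating by a
right inverse `W` of `Z + 1` gives `1 - Gᴴ G = 2 Wᴴ (Z + Zᴴ) W` for `G = (Z - 1) W`, which is
nonnegative whenever `Z + Zᴴ` is. -/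

open Matrix ComplexOrder

section CayleyTransform

variable {R : Type*} [Ring R] [StarRing R] {Z W : R}

theorem one_sub_star_cayley_mul_cayley (hW : (Z + 1) * W = 1) :
    1 - star ((Z - 1) * W) * ((Z - 1) * W)
      = star W * (Z + star Z) * W + star W * (Z + star Z) * W := by
  have hW' : star W * star (Z + 1) = 1 := by rw [← star_mul, hW, star_one]
  calc 1 - star ((Z - 1) * W) * ((Z - 1) * W)
      = star W * star (Z + 1) * ((Z + 1) * W) - star ((Z - 1) * W) * ((Z - 1) * W) := by
        rw [hW', hW, one_mul]
    _ = _ := by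
        simp only [star_mul, star_add, star_sub, star_one]
        noncomm_ring

theorem star_cayley_mul_cayley_le_one [PartialOrder R] [StarOrderedRing R]
    (hZ : 0 ≤ Z + star Z) (hW : (Z + 1) * W = 1) :
    star ((Z - 1) * W) * ((Z - 1) * W) ≤ 1 := by
  have h := star_left_conjugate_nonneg hZ W
  exact sub_nonneg.mp (one_sub_star_cayley_mul_cayley hW ▸ add_nonneg h h)

end CayleyTransform

/-- Cayley transform of a positive-real (immittance) matrix is a bounded-real
(scattering) matrix: if `Z + Zᴴ` is positive semidefinite and `Z + 1` is
invertible, then for `G = (Z − 1)(Z + 1)⁻¹` the matrix `1 − Gᴴ G` is positive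
semidefinite. -/
theorem cayley_immittance_to_scattering
    (n : ℕ) (Z : Matrix (Fin n) (Fin n) ℂ)
    (hZ : (Z + Zᴴ).PosSemidef) (hinv : IsUnit (Z + 1)) :
    (1 - ((Z - 1) * (Z + 1)⁻¹)ᴴ * ((Z - 1) * (Z + 1)⁻¹)).PosSemidef := by
  have hright : (Z + 1) * (Z + 1)⁻¹ = 1 :=
    mul_nonsing_inv _ ((isUnit_iff_isUnit_det _).mp hinv)
  open scoped MatrixOrder in
  rw [← nonneg_iff_posSemidef, sub_nonneg]
  exact star_cayley_mul_cayley_le_one hZ.nonneg hright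
end

section
/- For the damped oscillator susceptibility χ(ω) = ω_p²/(ω₀² − ω² − iγω) with ω₀, γ, ω_p > 0, the sum rule ∫_0^∞ ω · Im χ(ω) dω = (π/2)·ω_p² holds. -/
/-!
With `D(ω) = (ω₀² − ω²)² + γ²ω²`, the function `arctan ((ω − ω₀²/ω)/γ)` increases from `−π/2` to
`π/2` on `(0, ∞)` with derivative `γ(ω² + ω₀²)/D(ω)`, so `∫₀^∞ γ(ω² + ω₀²)/D = π`. The inversion
`ω ↦ ω₀²/ω` fixes `γω²/D(ω)` and has Jacobian `ω₀²/ω²`, so it carries `∫₀^∞ γω²/D` to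
`∫₀^∞ γω₀²/D`; each of the two halves is therefore `π/2`.
-/

open MeasureTheory Real Set Filter Topology Function

section ImproperFTC

variable {g g' : ℝ → ℝ} {a l m : ℝ}

/- Redefining `g a := m` makes `g` right-continuous at `a`, so that the versions of the improper
fundamental theorem of calculus assuming continuity at `a⁺` apply. -/
private lemma continuousWithinAt_update_and_hasDerivAt (hm : Tendsto g (𝓝[>] a) (𝓝 m))
    (hderiv : ∀ x ∈ Ioi a, HasDerivAt g (g' x) x) :
    ContinuousWithinAt (update g a m) (Ici a) a ∧
      ∀ x ∈ Ioi a, HasDerivAt (update g a m) (g' x) x := by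
  refine ⟨continuousWithinAt_update_same.2 (by rwa [Ici_sdiff_left]), fun x hx => ?_⟩
  refine (hderiv x hx).congr_of_eventuallyEq ?_
  filter_upwards [eventually_ne_nhds (ne_of_gt hx)] with y hy using update_of_ne hy ..

theorem integrableOn_Ioi_deriv_of_nonneg_of_tendsto_nhdsGT (hm : Tendsto g (𝓝[>] a) (𝓝 m))
    (hderiv : ∀ x ∈ Ioi a, HasDerivAt g (g' x) x) (g'pos : ∀ x ∈ Ioi a, 0 ≤ g' x)
    (hl : Tendsto g atTop (𝓝 l)) : IntegrableOn g' (Ioi a) := by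
  obtain ⟨hcont, hderiv'⟩ := continuousWithinAt_update_and_hasDerivAt hm hderiv
  exact integrableOn_Ioi_deriv_of_nonneg hcont hderiv' g'pos
    (hl.congr' ((update_eventuallyEq_cofinite g a m).filter_mono atTop_le_cofinite).symm)

theorem integral_Ioi_of_hasDerivAt_of_nonneg_of_tendsto_nhdsGT
    (hm : Tendsto g (𝓝[>] a) (𝓝 m)) (hderiv : ∀ x ∈ Ioi a, HasDerivAt g (g' x) x)
    (g'pos : ∀ x ∈ Ioi a, 0 ≤ g' x) (hl : Tendsto g atTop (𝓝 l)) :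
    ∫ x in Ioi a, g' x = l - m := by
  obtain ⟨hcont, hderiv'⟩ := continuousWithinAt_update_and_hasDerivAt hm hderiv
  simpa using integral_Ioi_of_hasDerivAt_of_nonneg hcont hderiv' g'pos
    (hl.congr' ((update_eventuallyEq_cofinite g a m).filter_mono atTop_le_cofinite).symm)

end ImproperFTC

theorem integral_Ioi_comp_div {E : Type*} [NormedAddCommGroup E] [NormedSpace ℝ E]
    (f : ℝ → E) {c : ℝ} (hc : 0 < c) :
    ∫ x in Ioi 0, (c / x ^ 2) • f (c / x) = ∫ x in Ioi 0, f x := by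
  have hderiv : ∀ x ∈ Ioi (0 : ℝ), HasDerivWithinAt (c / ·) (-(c / x ^ 2)) (Ioi 0) x :=
    fun x hx => by
      simpa [div_eq_mul_inv] using ((hasDerivAt_inv (ne_of_gt hx)).const_mul c).hasDerivWithinAt
  have hinj : InjOn (c / ·) (Ioi (0 : ℝ)) := fun x _ y _ hxy => by
    simpa only [div_div_cancel₀ hc.ne'] using congrArg (c / ·) hxy
  have himage : (c / ·) '' Ioi (0 : ℝ) = Ioi 0 := by
    refine (image_subset_iff.2 fun x hx => div_pos hc hx).antisymm fun y hy => ?_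
    exact ⟨c / y, div_pos hc hy, div_div_cancel₀ hc.ne'⟩
  conv_rhs =>
    rw [← himage, integral_image_eq_integral_abs_deriv_smul measurableSet_Ioi hderiv hinj]
  refine setIntegral_congr_fun measurableSet_Ioi fun x hx => ?_
  rw [abs_neg, abs_of_pos (div_pos hc (pow_pos hx 2))]

theorem tendsto_sub_div_atTop (c : ℝ) : Tendsto (fun x : ℝ => x - c / x) atTop atTop :=
  tendsto_id.atTop_add (tendsto_const_nhds.div_atTop tendsto_id).neg

theorem tendsto_sub_div_nhdsGT_zero {c : ℝ} (hc : 0 < c) :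
    Tendsto (fun x : ℝ => x - c / x) (𝓝[>] 0) atBot := by
  have : Tendsto (fun x : ℝ => c / x) (𝓝[>] 0) atTop := by
    simpa [div_eq_mul_inv] using tendsto_inv_nhdsGT_zero.const_mul_atTop hc
  simpa [sub_eq_add_neg] using
    (tendsto_nhdsWithin_of_tendsto_nhds tendsto_id).add_atBot (tendsto_neg_atTop_atBot.comp this)

/-- `|ω₀² − ω² − iγω|²`, so that `Im χ(ω) = ω_p² γ ω / lorentzDenom ω₀ γ ω`. -/
def lorentzDenom (ω₀ γ ω : ℝ) : ℝ := (ω₀ ^ 2 - ω ^ 2) ^ 2 + γ ^ 2 * ω ^ 2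

section Lorentz

variable {ω₀ γ ω : ℝ}

theorem lorentzDenom_nonneg : 0 ≤ lorentzDenom ω₀ γ ω := by
  unfold lorentzDenom; positivity

theorem lorentzDenom_pos (hγ : γ ≠ 0) (hω : ω ≠ 0) : 0 < lorentzDenom ω₀ γ ω :=
  add_pos_of_nonneg_of_pos (sq_nonneg _) (by positivity)

theorem lorentzDenom_inversion (hω₀ : ω₀ ≠ 0) (hω : ω ≠ 0) :
    lorentzDenom ω₀ γ (ω₀ ^ 2 / ω) = ω₀ ^ 4 / ω ^ 4 * lorentzDenom ω₀ γ ω := by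
  unfold lorentzDenom
  field_simp
  ring

theorem hasDerivAt_arctan_lorentz (hγ : γ ≠ 0) (hω : ω ≠ 0) :
    HasDerivAt (fun x => arctan ((x - ω₀ ^ 2 / x) / γ))
      (γ * (ω ^ 2 + ω₀ ^ 2) / lorentzDenom ω₀ γ ω) ω := by
  have hu : HasDerivAt (fun x => (x - ω₀ ^ 2 / x) / γ) ((1 - ω₀ ^ 2 * -(ω ^ 2)⁻¹) / γ) ω :=
    ((hasDerivAt_id ω).sub ((hasDerivAt_inv hω).const_mul (ω₀ ^ 2))).div_const γ
  refine ((hasDerivAt_arctan _).comp ω hu).congr_deriv ?_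
  have := (lorentzDenom_pos (ω₀ := ω₀) hγ hω).ne'
  unfold lorentzDenom at this ⊢
  field_simp
  ring

theorem tendsto_arctan_lorentz_atTop (hγ : 0 < γ) :
    Tendsto (fun x => arctan ((x - ω₀ ^ 2 / x) / γ)) atTop (𝓝 (π / 2)) :=
  (tendsto_arctan_atTop.mono_right nhdsWithin_le_nhds).comp
    ((tendsto_sub_div_atTop _).atTop_div_const hγ)

theorem tendsto_arctan_lorentz_nhdsGT_zero (hω₀ : ω₀ ≠ 0) (hγ : 0 < γ) :
    Tendsto (fun x => arctan ((x - ω₀ ^ 2 / x) / γ)) (𝓝[>] 0) (𝓝 (-(π / 2))) :=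
  (tendsto_arctan_atBot.mono_right nhdsWithin_le_nhds).comp
    ((tendsto_sub_div_nhdsGT_zero (by positivity)).atBot_div_const hγ)

theorem integral_Ioi_sq_div_lorentzDenom (hω₀ : ω₀ ≠ 0) (hγ : 0 < γ) :
    ∫ ω in Ioi 0, γ * ω ^ 2 / lorentzDenom ω₀ γ ω = π / 2 := by
  set f := fun ω => γ * ω ^ 2 / lorentzDenom ω₀ γ ω
  set g := fun ω => γ * ω₀ ^ 2 / lorentzDenom ω₀ γ ω
  have hfg : (fun ω => γ * (ω ^ 2 + ω₀ ^ 2) / lorentzDenom ω₀ γ ω) = f + g := by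
    ext ω; simp only [f, g, Pi.add_apply]; ring
  have hderiv : ∀ x ∈ Ioi (0 : ℝ), HasDerivAt (fun x => arctan ((x - ω₀ ^ 2 / x) / γ))
      ((f + g) x) x := fun x hx => hfg ▸ hasDerivAt_arctan_lorentz hγ.ne' (ne_of_gt hx)
  have hf_nonneg : 0 ≤ f := fun ω => div_nonneg (by positivity) lorentzDenom_nonneg
  have hg_nonneg : 0 ≤ g := fun ω => div_nonneg (by positivity) lorentzDenom_nonneg
  have hsum_nonneg : ∀ x ∈ Ioi (0 : ℝ), 0 ≤ (f + g) x :=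
    fun x _ => add_nonneg (hf_nonneg x) (hg_nonneg x)
  have hlim_zero := tendsto_arctan_lorentz_nhdsGT_zero hω₀ hγ
  have hlim_top := tendsto_arctan_lorentz_atTop (ω₀ := ω₀) hγ
  obtain ⟨hf_int, hg_int⟩ := (integrable_add_iff_of_nonneg
    (by unfold f lorentzDenom; fun_prop : Measurable f).aestronglyMeasurable
    (.of_forall hf_nonneg) (.of_forall hg_nonneg)).1
    (integrableOn_Ioi_deriv_of_nonneg_of_tendsto_nhdsGT hlim_zero hderiv hsum_nonneg hlim_top)
  have hgf : ∫ ω in Ioi 0, g ω = ∫ ω in Ioi 0, f ω := by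
    rw [← integral_Ioi_comp_div f (by positivity : 0 < ω₀ ^ 2)]
    refine setIntegral_congr_fun measurableSet_Ioi fun x hx => ?_
    have hx' : x ≠ 0 := ne_of_gt hx
    have := (lorentzDenom_pos (ω₀ := ω₀) hγ.ne' hx').ne'
    simp only [f, g, smul_eq_mul, lorentzDenom_inversion hω₀ hx']
    field_simp
  have htotal := integral_Ioi_of_hasDerivAt_of_nonneg_of_tendsto_nhdsGT hlim_zero hderiv
    hsum_nonneg hlim_top
  rw [integral_add' hf_int hg_int, hgf] at htotal
  linarith

end Lorentz

theorem lorentz_sum_rule_general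
    (ω₀ γ ωp : ℝ) (hω₀ : 0 < ω₀) (hγ : 0 < γ) :
    ∫ ω in Ioi (0 : ℝ),
        ω * (ωp ^ 2 * γ * ω / ((ω₀ ^ 2 - ω ^ 2) ^ 2 + γ ^ 2 * ω ^ 2)) =
      π / 2 * ωp ^ 2 := by
  calc ∫ ω in Ioi (0 : ℝ), ω * (ωp ^ 2 * γ * ω / ((ω₀ ^ 2 - ω ^ 2) ^ 2 + γ ^ 2 * ω ^ 2))
      = ∫ ω in Ioi (0 : ℝ), ωp ^ 2 * (γ * ω ^ 2 / lorentzDenom ω₀ γ ω) := by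
        congr 1; ext ω; rw [lorentzDenom]; ring
    _ = π / 2 * ωp ^ 2 := by
        rw [integral_const_mul, integral_Ioi_sq_div_lorentzDenom hω₀.ne' hγ, mul_comm]

/-- Sum rule for the damped oscillator susceptibility
`χ(ω) = ω_p²/(ω₀² − ω² − iγω)`:
`∫_0^∞ ω · Im χ(ω) dω = (π/2)·ω_p²`. -/
theorem lorentz_sum_rule
    (ω₀ γ ωp : ℝ) (hω₀ : 0 < ω₀) (hγ : 0 < γ) (hωp : 0 < ωp) :
    ∫ ω in Ioi (0 : ℝ),
        ω * (ωp ^ 2 * γ * ω / ((ω₀ ^ 2 - ω ^ 2) ^ 2 + γ ^ 2 * ω ^ 2)) =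
      π / 2 * ωp ^ 2 :=
  lorentz_sum_rule_general ω₀ γ ωp hω₀ hγ
end
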